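/- arXiv:1207.5920 — 3 statements merged into one kernel-verified Lean document; each statement's English description precedes it below -/
import Mathlib

section
/- For every ℓ > 0, every y > ℓ/2, and every n ∈ ℕ, one has h_{n,ℓ}(y) = Σ_{i=0}^{n} 4^i · (n+i)! / ((n−i)! · (2i)!) · ℓ^{2i} · y / (4y² − ℓ²)^i. -/
open Finset

/-- `h ℓ n y = ((2y+ℓ)^(2n+1) + (2y−ℓ)^(2n+1)) / (4·(4y²−ℓ²)^n)`. -/
noncomputable def catenoidH (ℓ : ℝ) (n : ℕ) (y : ℝ) : ℝ :=
  ((2*y + ℓ)^(2*n+1) + (2*y - ℓ)^(2*n+1)) / (4 * (4*y^2 - ℓ^2)^n)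

/-!
With `a = 2y + ℓ` and `b = 2y - ℓ` we have `a + b = 4y`, `(a - b)² = 4ℓ²` and `ab = 4y² - ℓ²`,
and the theorem becomes the identity, valid in every commutative ring,
`a^(2n+1) + b^(2n+1) = (a + b) ∑_{i+j=n} C(2i+j, 2i) ((a - b)²)^i (ab)^j`.
The sum is the Morgan–Voyce polynomial `b_n` homogenized in `D = (a - b)²`, `p = ab`. Together with
its companion `B_n` it obeys Pascal-type one-step recurrences, which combine into
`b_{n+2} + p² b_n = (D + 2p) b_{n+1}`; since `a² + b² = D + 2p`, the odd power sums
`a^(2n+1) + b^(2n+1)` satisfy the same recurrence, and both sides agree for `n = 0, 1`.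
-/

section MorganVoyce

variable {R : Type*} [CommSemiring R] (D p : R)

def morganVoyceb (m : ℕ) : R :=
  ∑ ij ∈ antidiagonal m, ((2 * ij.1 + ij.2).choose (2 * ij.1) : R) * D ^ ij.1 * p ^ ij.2

def morganVoyceB (m : ℕ) : R :=
  ∑ ij ∈ antidiagonal m, ((2 * ij.1 + ij.2 + 1).choose (2 * ij.1 + 1) : R) * D ^ ij.1 * p ^ ij.2

@[simp] lemma morganVoyceb_zero : morganVoyceb D p 0 = 1 := by simp [morganVoyceb]

@[simp] lemma morganVoyceB_zero : morganVoyceB D p 0 = 1 := by simp [morganVoyceB]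

lemma morganVoyceb_succ (m : ℕ) :
    morganVoyceb D p (m + 1) = p * morganVoyceb D p m + D * morganVoyceB D p m := by
  have hF : p ^ (m + 1) + ∑ ij ∈ antidiagonal m,
        ((2 * ij.1 + ij.2 + 1).choose (2 * ij.1 + 2) : R) * D ^ (ij.1 + 1) * p ^ ij.2 =
      p * morganVoyceb D p m := by
    -- peel `∑_{i+j=m+1} C(2i+j-1, 2i) Dⁱ pʲ` once at `i = 0` and once at `j = 0`
    let F : ℕ × ℕ → R := fun ij ↦
      ((2 * ij.1 + ij.2 - 1).choose (2 * ij.1) : R) * D ^ ij.1 * p ^ ij.2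
    calc _ = ∑ ij ∈ antidiagonal (m + 1), F ij := by
          rw [Nat.sum_antidiagonal_succ]
          congr 1
          · simp [F]
          · refine sum_congr rfl fun ij _ ↦ ?_
            simp only [F]
            rw [show 2 * (ij.1 + 1) + ij.2 - 1 = 2 * ij.1 + ij.2 + 1 by omega, mul_add, mul_one]
      _ = p * morganVoyceb D p m := by
          rw [Nat.sum_antidiagonal_succ', morganVoyceb, mul_sum]
          simp only [F, Nat.choose_eq_zero_of_lt (show 2 * (m + 1) + 0 - 1 < 2 * (m + 1) by omega),
            Nat.cast_zero, zero_mul, zero_add]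
          refine sum_congr rfl fun ij _ ↦ ?_
          rw [show 2 * ij.1 + (ij.2 + 1) - 1 = 2 * ij.1 + ij.2 by omega]
          ring
  rw [morganVoyceb, Nat.sum_antidiagonal_succ, ← hF, morganVoyceB, mul_sum, add_assoc,
    ← sum_add_distrib]
  congr 1
  · simp
  · refine sum_congr rfl fun ij _ ↦ ?_
    rw [show 2 * (ij.1 + 1) + ij.2 = 2 * ij.1 + ij.2 + 1 + 1 by ring,
      show 2 * (ij.1 + 1) = 2 * ij.1 + 1 + 1 by ring, Nat.choose_succ_succ']
    push_cast
    ring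

lemma morganVoyceB_succ (m : ℕ) :
    morganVoyceB D p (m + 1) = p * morganVoyceB D p m + morganVoyceb D p (m + 1) := by
  have hshift : ∑ ij ∈ antidiagonal (m + 1),
      ((2 * ij.1 + ij.2).choose (2 * ij.1 + 1) : R) * D ^ ij.1 * p ^ ij.2 =
        p * morganVoyceB D p m := by
    rw [Nat.sum_antidiagonal_succ', Nat.choose_eq_zero_of_lt (by omega), morganVoyceB, mul_sum]
    simp only [Nat.cast_zero, zero_mul, zero_add, ← add_assoc, pow_succ]
    exact sum_congr rfl fun ij _ ↦ by ring
  rw [← hshift, morganVoyceB, morganVoyceb, ← sum_add_distrib]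
  exact sum_congr rfl fun ij _ ↦ by rw [Nat.choose_succ_succ']; push_cast; ring

lemma morganVoyceb_add_two (m : ℕ) :
    morganVoyceb D p (m + 2) + p ^ 2 * morganVoyceb D p m =
      (D + 2 * p) * morganVoyceb D p (m + 1) := by
  rw [morganVoyceb_succ D p (m + 1), morganVoyceB_succ, morganVoyceb_succ D p m]
  ring

end MorganVoyce

theorem pow_add_pow_odd_eq_mul_morganVoyceb {R : Type*} [CommRing R] (a b : R) (n : ℕ) :
    a ^ (2 * n + 1) + b ^ (2 * n + 1) = (a + b) * morganVoyceb ((a - b) ^ 2) (a * b) n := by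
  induction n using Nat.twoStepInduction with
  | zero => simp
  | one => rw [morganVoyceb_succ]; simp; ring
  | more m ih₀ ih₁ =>
    have hrec := morganVoyceb_add_two ((a - b) ^ 2) (a * b) m
    linear_combination -(a + b) * hrec + (a ^ 2 + b ^ 2) * ih₁ - (a * b) ^ 2 * ih₀

theorem stmt_4 (ℓ : ℝ) (hℓ : 0 < ℓ) (y : ℝ) (hy : ℓ/2 < y) (n : ℕ) :
    catenoidH ℓ n y =
      ∑ i ∈ range (n+1),
        (4:ℝ)^i * (Nat.factorial (n+i)) / ((Nat.factorial (n-i)) * Nat.factorial (2*i))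
          * ℓ^(2*i) * y / (4*y^2 - ℓ^2)^i := by
  have hp : 4 * y ^ 2 - ℓ ^ 2 ≠ 0 := by nlinarith
  rw [catenoidH, pow_add_pow_odd_eq_mul_morganVoyceb, morganVoyceb,
    Nat.sum_antidiagonal_eq_sum_range_succ_mk, mul_sum, sum_div,
    show (2 * y + ℓ) + (2 * y - ℓ) = 4 * y by ring,
    show (2 * y + ℓ - (2 * y - ℓ)) ^ 2 = 4 * ℓ ^ 2 by ring,
    show (2 * y + ℓ) * (2 * y - ℓ) = 4 * y ^ 2 - ℓ ^ 2 by ring]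
  generalize 4 * y ^ 2 - ℓ ^ 2 = p at hp ⊢
  refine sum_congr rfl fun i hi ↦ ?_
  have hin : i ≤ n := Nat.lt_succ_iff.mp (mem_range.mp hi)
  rw [show 2 * i + (n - i) = n + i by omega, Nat.cast_choose ℝ (by omega : 2 * i ≤ n + i),
    show n + i - 2 * i = n - i by omega, ← pow_mul_pow_sub p hin]
  field_simp
  ring
end

section
/- (Theorem 2.4(1)) Let ℓ > 0 and m ≥ 1, and let ν_{m,ℓ} denote the minimum value of h_{m,ℓ} over (ℓ/2, ∞). If a > ν_{m,ℓ}, then the equation h_{m,ℓ}(y) = a has exactly two solutions y_{a,m,ℓ}^− < y_{a,m,ℓ}^+ in the interval (ℓ/2, ∞). -/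
open Set Filter Topology

lemma StrictConvexOn.div_const {s : Set ℝ} {f : ℝ → ℝ} (hf : StrictConvexOn ℝ s f) {k : ℝ}
    (hk : 0 < k) : StrictConvexOn ℝ s fun x => f x / k := by
  refine ⟨hf.1, fun x hx y hy hxy a b ha hb hab => ?_⟩
  have := div_lt_div_of_pos_right (hf.2 hx hy hxy ha hb hab) hk
  simp only [smul_eq_mul] at this ⊢
  linarith [mul_div_assoc a (f x) k, mul_div_assoc b (f y) k, add_div (a * f x) (b * f y) k]

lemma StrictConvexOn.eq_or_eq_of_apply_eq {s : Set ℝ} {f : ℝ → ℝ} (hf : StrictConvexOn ℝ s f)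
    {x y z : ℝ} (hx : x ∈ s) (hy : y ∈ s) (hz : z ∈ s) (hxy : x < y) (hfxy : f x = f y)
    (hfz : f z = f x) : z = x ∨ z = y := by
  have between : ∀ ⦃p q r⦄, p ∈ s → r ∈ s → p < q → q < r → f q < max (f p) (f r) :=
    fun p q r hp hr hpq hqr => hf.lt_on_openSegment hp hr (hpq.trans hqr).ne
      (by rw [openSegment_eq_Ioo (hpq.trans hqr)]; exact ⟨hpq, hqr⟩)
  by_contra! ⟨hzx, hzy⟩
  rcases hzx.lt_or_gt with hzx | hxz
  · simpa [hfz, hfxy] using between hz hy hzx hxy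
  rcases hzy.lt_or_gt with hzy | hyz
  · simpa [hfz, hfxy] using between hx hy hxz hzy
  · simpa [hfz, hfxy] using between hx hz hxy hyz

theorem StrictConvexOn.exists_pair_eq_of_tendsto_atTop {f : ℝ → ℝ} {b y₀ a : ℝ}
    (hf : StrictConvexOn ℝ (Ioi b) f) (hb : Tendsto f (𝓝[>] b) atTop)
    (htop : Tendsto f atTop atTop) (hy₀ : b < y₀) (ha : f y₀ < a) :
    ∃ y₁ y₂, b < y₁ ∧ y₁ < y₂ ∧ f y₁ = a ∧ f y₂ = a ∧
      ∀ y, b < y → f y = a → y = y₁ ∨ y = y₂ := by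
  have hcont : ContinuousOn f (Ioi b) := hf.convexOn.continuousOn isOpen_Ioi
  obtain ⟨yl, hal, hyl⟩ := ((hb.eventually_gt_atTop a).and (Ioo_mem_nhdsGT hy₀)).exists
  obtain ⟨y₁, ⟨hly₁, hy₁⟩, hfy₁⟩ := intermediate_value_Ioo' hyl.2.le
    (hcont.mono (Icc_subset_Ioi_iff hyl.2.le |>.mpr hyl.1)) ⟨ha, hal⟩
  obtain ⟨yr, har, hyr⟩ := ((htop.eventually_gt_atTop a).and (eventually_gt_atTop y₀)).exists
  obtain ⟨y₂, ⟨hy₂, -⟩, hfy₂⟩ := intermediate_value_Ioo hyr.le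
    (hcont.mono (Icc_subset_Ioi_iff hyr.le |>.mpr hy₀)) ⟨ha, har⟩
  have hby₁ : b < y₁ := hyl.1.trans hly₁
  refine ⟨y₁, y₂, hby₁, hy₁.trans hy₂, hfy₁, hfy₂, fun y hy hfy => ?_⟩
  exact hf.eq_or_eq_of_apply_eq hby₁ (hy₀.trans hy₂) hy (hy₁.trans hy₂)
    (hfy₁.trans hfy₂.symm) (hfy.trans hfy₁.symm)

theorem strictConvexOn_sub_pow_succ_div_sub_pow {n : ℕ} (hn : n ≠ 0) {a b c : ℝ} (hab : a ≠ b)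
    (hac : a ≤ c) (hbc : b ≤ c) :
    StrictConvexOn ℝ (Ioi c) fun y => (y - a) ^ (n + 1) / (y - b) ^ n := by
  refine ⟨convex_Ioi c, fun u hu v hv huv s t hs ht hst => ?_⟩
  simp only [mem_Ioi, smul_eq_mul] at hu hv ⊢
  set r : ℝ → ℝ := fun y => (y - a) / (y - b)
  have hpersp : ∀ y, c < y → (y - a) ^ (n + 1) / (y - b) ^ n = (y - b) * r y ^ (n + 1) := by
    intro y hy
    have : y - b ≠ 0 := by linarith
    simp only [r, div_pow]
    field_simp
    ring
  set w := s * u + t * v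
  have hwb : w - b = s * (u - b) + t * (v - b) := by simp only [w]; linear_combination b * hst
  have hw : c < w := by nlinarith
  have hr_nonneg : ∀ y, c < y → 0 ≤ r y := fun y hy => div_nonneg (by linarith) (by linarith)
  have hr_ne : r u ≠ r v := by
    simp only [r]
    rw [Ne, div_eq_div_iff (by linarith) (by linarith)]
    intro h
    exact huv (mul_left_cancel₀ (sub_ne_zero.mpr hab) (by linear_combination h))
  have hwb0 : 0 < w - b := by linarith
  have hrw : r w = s * (u - b) / (w - b) * r u + t * (v - b) / (w - b) * r v := by
    have : u - b ≠ 0 := by linarith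
    have : v - b ≠ 0 := by linarith
    simp only [r]
    field_simp
    simp only [w]
    linear_combination a * hst
  have hα : 0 < s * (u - b) / (w - b) := div_pos (mul_pos hs (by linarith)) hwb0
  have hβ : 0 < t * (v - b) / (w - b) := div_pos (mul_pos ht (by linarith)) hwb0
  have key := (strictConvexOn_pow (n := n + 1) (by omega)).2 (hr_nonneg u hu) (hr_nonneg v hv)
    hr_ne hα hβ (by rw [← add_div, ← hwb, div_self hwb0.ne'])
  simp only [smul_eq_mul, ← hrw] at key
  rw [hpersp w hw, hpersp u hu, hpersp v hv]
  calc (w - b) * r w ^ (n + 1)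
      < (w - b) * (s * (u - b) / (w - b) * r u ^ (n + 1) + t * (v - b) / (w - b) * r v ^ (n + 1)) :=
        mul_lt_mul_of_pos_left key hwb0
    _ = s * ((u - b) * r u ^ (n + 1)) + t * ((v - b) * r v ^ (n + 1)) := by
        field_simp

theorem tendsto_sub_pow_succ_div_sub_pow_nhdsGT {n : ℕ} (hn : n ≠ 0) {a b : ℝ} (hab : a < b) :
    Tendsto (fun y => (y - a) ^ (n + 1) / (y - b) ^ n) (𝓝[>] b) atTop := by
  have hden : Tendsto (fun y => (y - b) ^ n) (𝓝[>] b) (𝓝[>] 0) := by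
    refine tendsto_nhdsWithin_iff.mpr ⟨?_, ?_⟩
    · have : Continuous fun y : ℝ => (y - b) ^ n := by fun_prop
      simpa [zero_pow hn] using (this.tendsto b).mono_left nhdsWithin_le_nhds
    · filter_upwards [self_mem_nhdsWithin] with y (hy : b < y) using pow_pos (sub_pos.mpr hy) n
  have hnum : Tendsto (fun y => (y - a) ^ (n + 1)) (𝓝[>] b) (𝓝 ((b - a) ^ (n + 1))) := by
    have : Continuous fun y : ℝ => (y - a) ^ (n + 1) := by fun_prop
    exact (this.tendsto b).mono_left nhdsWithin_le_nhds
  simpa [div_eq_mul_inv, mul_comm] using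
    hden.inv_tendsto_nhdsGT_zero.atTop_mul_pos (pow_pos (sub_pos.mpr hab) (n + 1)) hnum

theorem sub_le_sub_pow_succ_div_sub_pow (n : ℕ) {a b y : ℝ} (hab : a ≤ b) (hy : b < y) :
    y - a ≤ (y - a) ^ (n + 1) / (y - b) ^ n := by
  rw [le_div_iff₀ (pow_pos (sub_pos.mpr hy) n), pow_succ']
  gcongr
  linarith

lemma catenoidH_eq {ℓ : ℝ} (hℓ : 0 ≤ ℓ) (n : ℕ) {y : ℝ} (hy : ℓ / 2 < y) :
    catenoidH ℓ n y =
      ((y + ℓ / 2) ^ (n + 1) / (y - ℓ / 2) ^ n + (y - ℓ / 2) ^ (n + 1) / (y + ℓ / 2) ^ n) / 2 := by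
  have hp : 0 < 2 * y + ℓ := by linarith
  have hq : 0 < 2 * y - ℓ := by linarith
  rw [catenoidH, show 4 * y ^ 2 - ℓ ^ 2 = (2 * y + ℓ) * (2 * y - ℓ) by ring,
    show y + ℓ / 2 = (2 * y + ℓ) / 2 by ring, show y - ℓ / 2 = (2 * y - ℓ) / 2 by ring]
  generalize 2 * y + ℓ = p at hp ⊢
  generalize 2 * y - ℓ = q at hq ⊢
  field_simp
  ring

lemma strictConvexOn_catenoidH {ℓ : ℝ} (hℓ : 0 < ℓ) {n : ℕ} (hn : n ≠ 0) :
    StrictConvexOn ℝ (Ioi (ℓ / 2)) (catenoidH ℓ n) := by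
  have h₁ := strictConvexOn_sub_pow_succ_div_sub_pow hn (a := -(ℓ / 2)) (b := ℓ / 2) (c := ℓ / 2)
    (by linarith) (by linarith) le_rfl
  have h₂ := strictConvexOn_sub_pow_succ_div_sub_pow hn (a := ℓ / 2) (b := -(ℓ / 2)) (c := ℓ / 2)
    (by linarith) le_rfl (by linarith)
  refine ((h₁.add h₂).div_const two_pos).congr fun y (hy : ℓ / 2 < y) => ?_
  simp only [sub_neg_eq_add]
  exact (catenoidH_eq hℓ.le n hy).symm

lemma half_le_catenoidH {ℓ : ℝ} (hℓ : 0 ≤ ℓ) (n : ℕ) {y : ℝ} (hy : ℓ / 2 < y) :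
    (y + ℓ / 2) ^ (n + 1) / (y - ℓ / 2) ^ n / 2 ≤ catenoidH ℓ n y := by
  rw [catenoidH_eq hℓ n hy]
  have : 0 ≤ (y - ℓ / 2) ^ (n + 1) / (y + ℓ / 2) ^ n := by
    apply div_nonneg <;> apply pow_nonneg <;> linarith
  linarith

lemma tendsto_catenoidH_nhdsGT {ℓ : ℝ} (hℓ : 0 < ℓ) {n : ℕ} (hn : n ≠ 0) :
    Tendsto (catenoidH ℓ n) (𝓝[>] (ℓ / 2)) atTop := by
  have hpole := tendsto_sub_pow_succ_div_sub_pow_nhdsGT hn (by linarith : -(ℓ / 2) < ℓ / 2)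
  refine tendsto_atTop_mono' _ ?_ (hpole.atTop_div_const two_pos)
  filter_upwards [self_mem_nhdsWithin] with y (hy : ℓ / 2 < y)
  simpa only [sub_neg_eq_add] using half_le_catenoidH hℓ.le n hy

lemma tendsto_catenoidH_atTop {ℓ : ℝ} (hℓ : 0 ≤ ℓ) (n : ℕ) :
    Tendsto (catenoidH ℓ n) atTop atTop := by
  refine tendsto_atTop_mono' _ ?_
    ((tendsto_atTop_add_const_right _ (ℓ / 2) tendsto_id).atTop_div_const two_pos)
  filter_upwards [eventually_gt_atTop (ℓ / 2)] with y hy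
  calc (y + ℓ / 2) / 2
      ≤ (y + ℓ / 2) ^ (n + 1) / (y - ℓ / 2) ^ n / 2 := by
        gcongr
        simpa only [sub_neg_eq_add] using
          sub_le_sub_pow_succ_div_sub_pow n (a := -(ℓ / 2)) (by linarith) hy
    _ ≤ catenoidH ℓ n y := half_le_catenoidH hℓ n hy

theorem stmt_8 (ℓ : ℝ) (hℓ : 0 < ℓ) (m : ℕ) (hm : 1 ≤ m) (ν : ℝ)
    (hν : IsLeast (catenoidH ℓ m '' Set.Ioi (ℓ/2)) ν)
    (a : ℝ) (ha : ν < a) :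
    ∃ y₁ y₂ : ℝ, ℓ/2 < y₁ ∧ y₁ < y₂ ∧
      catenoidH ℓ m y₁ = a ∧ catenoidH ℓ m y₂ = a ∧
      ∀ y : ℝ, ℓ/2 < y → catenoidH ℓ m y = a → y = y₁ ∨ y = y₂ := by
  obtain ⟨⟨y₀, hy₀, rfl⟩, -⟩ := hν
  have hm₀ : m ≠ 0 := Nat.one_le_iff_ne_zero.mp hm
  exact (strictConvexOn_catenoidH hℓ hm₀).exists_pair_eq_of_tendsto_atTop
    (tendsto_catenoidH_nhdsGT hℓ hm₀) (tendsto_catenoidH_atTop hℓ.le m) hy₀ ha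
end

section
/- (Lemma 4.2) Let ℓ > 0, m ≥ 1, and y > ℓ/2. Define the m×m symmetric tridiagonal matrix Ĥ_m(y) with entries Ĥ_{1,1}(y) = ∂²S_ℓ/∂s²(h_{0,ℓ}(y), h_{1,ℓ}(y)); Ĥ_{i,i}(y) = ∂²S_ℓ/∂t²(h_{i−2,ℓ}(y), h_{i−1,ℓ}(y)) + ∂²S_ℓ/∂s²(h_{i−1,ℓ}(y), h_{i,ℓ}(y)) for 2 ≤ i ≤ m; Ĥ_{i,i+1}(y) = Ĥ_{i+1,i}(y) = ∂²S_ℓ/∂s∂t(h_{i−1,ℓ}(y), h_{i,ℓ}(y)) for 1 ≤ i ≤ m−1; and Ĥ_{i,j}(y) = 0 when |i−j| ≥ 2. Then det Ĥ_m(y) = (−1)^m · Ĥ_{1,2}(y)·Ĥ_{2,3}(y)···Ĥ_{m,m+1}(y) · h'_{m,ℓ}(y), where Ĥ_{m,m+1}(y) := ∂²S_ℓ/∂s∂t(h_{m−1,ℓ}(y), h_{m,ℓ}(y)) and h'_{m,ℓ} denotes the derivative of h_{m,ℓ}. -/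
open Finset

/-- `S ℓ s t = (s+t)·√((t−s)² + ℓ²)`. -/
noncomputable def coneS (ℓ s t : ℝ) : ℝ := (s + t) * Real.sqrt ((t - s)^2 + ℓ^2)

/-- `∂²S/∂s²` at `(s,t)`. -/
noncomputable def coneSss (ℓ s t : ℝ) : ℝ :=
  deriv (fun u : ℝ => deriv (fun v : ℝ => coneS ℓ v t) u) s

/-- `∂²S/∂t²` at `(s,t)`. -/
noncomputable def coneStt (ℓ s t : ℝ) : ℝ :=
  deriv (fun u : ℝ => deriv (fun v : ℝ => coneS ℓ s v) u) t

/-- `∂²S/∂s∂t` at `(s,t)`. -/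
noncomputable def coneSst (ℓ s t : ℝ) : ℝ :=
  deriv (fun u : ℝ => deriv (fun v : ℝ => coneS ℓ u v) t) s

/-- The symmetric tridiagonal matrix `Ĥ_m(y)` (indices shifted to start at `0`). -/
noncomputable def Hhat (ℓ y : ℝ) (m : ℕ) : Matrix (Fin m) (Fin m) ℝ :=
  Matrix.of fun i j : Fin m =>
    if (i : ℕ) = (j : ℕ) then
      (if (i : ℕ) = 0 then coneSss ℓ (catenoidH ℓ 0 y) (catenoidH ℓ 1 y)
       else coneStt ℓ (catenoidH ℓ ((i : ℕ) - 1) y) (catenoidH ℓ (i : ℕ) y)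
            + coneSss ℓ (catenoidH ℓ (i : ℕ) y) (catenoidH ℓ ((i : ℕ) + 1) y))
    else if (i : ℕ) + 1 = (j : ℕ) then
      coneSst ℓ (catenoidH ℓ (i : ℕ) y) (catenoidH ℓ ((i : ℕ) + 1) y)
    else if (j : ℕ) + 1 = (i : ℕ) then
      coneSst ℓ (catenoidH ℓ (j : ℕ) y) (catenoidH ℓ ((j : ℕ) + 1) y)
    else 0

/-!
The values `h_n = h_{n,ℓ}(y)` are a critical configuration of the discrete action
`∑ S_ℓ(h_n, h_{n+1})`. With `a = 2y+ℓ`, `b = 2y-ℓ`, `A = a^(n+1)`, `B = b^(n+1)` one has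
`∂S/∂s (h_n, h_{n+1}) = (aB² - bA²)/(2AB)` and `∂S/∂t (h_n, h_{n+1}) = (aA² - bB²)/(2AB)`, hence
`∂S/∂t (h_n, h_{n+1}) + ∂S/∂s (h_{n+1}, h_{n+2}) = 0` and `∂S/∂s (h_0, h_1) = -ℓ` for all `y`.
Differentiating these identities in `y` shows that `(h'_n)` solves the three-term recurrence
given by the rows of `Ĥ`, with `h'_0 = 1`, and for a symmetric tridiagonal matrix such a
solution `x` yields `det = (-1)^m e_0 ⋯ e_(m-1) x_m` by the continuant recurrence.
-/

namespace Matrix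

variable {R : Type*} [CommRing R]

def symmTridiagonal (d e : ℕ → R) (m : ℕ) : Matrix (Fin m) (Fin m) R :=
  of fun i j : Fin m =>
    if (i : ℕ) = (j : ℕ) then d i
    else if (i : ℕ) + 1 = (j : ℕ) then e i
    else if (j : ℕ) + 1 = (i : ℕ) then e j
    else 0

variable (d e : ℕ → R)

theorem symmTridiagonal_submatrix_castSucc (m : ℕ) :
    (symmTridiagonal d e (m + 1)).submatrix Fin.castSucc Fin.castSucc = symmTridiagonal d e m := by
  ext i j
  simp [symmTridiagonal]

theorem det_symmTridiagonal_succ_succ (m : ℕ) :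
    (symmTridiagonal d e (m + 2)).det =
      d (m + 1) * (symmTridiagonal d e (m + 1)).det - e m ^ 2 * (symmTridiagonal d e m).det := by
  set T := symmTridiagonal d e (m + 2)
  have hT : ∀ i j : Fin (m + 2), T i j =
      if (i : ℕ) = j then d i else if (i : ℕ) + 1 = j then e i
      else if (j : ℕ) + 1 = i then e j else 0 := fun _ _ => rfl
  let p : Fin (m + 2) := (Fin.last m).castSucc
  have hp : p ≠ Fin.last (m + 1) := Fin.castSucc_lt_last _ |>.ne
  have hminor : (T.submatrix Fin.castSucc p.succAbove).det = e m * (symmTridiagonal d e m).det := by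
    rw [det_succ_column _ (Fin.last m), Fintype.sum_eq_single (Fin.last m)]
    · have hcols : p.succAbove ∘ Fin.castSucc =
          Fin.castSucc ∘ (Fin.castSucc : Fin m → Fin (m + 1)) := by
        funext k
        exact Fin.succAbove_of_castSucc_lt _ _
          (Fin.castSucc_lt_castSucc_iff.2 (Fin.castSucc_lt_last k))
      rw [Fin.succAbove_last, submatrix_submatrix, hcols, ← submatrix_submatrix,
        symmTridiagonal_submatrix_castSucc, symmTridiagonal_submatrix_castSucc]
      simp [p, hT, Fin.succAbove_of_le_castSucc, Even.neg_one_pow ⟨m, rfl⟩]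
    · intro i hi
      have hi' : (i : ℕ) < m := Fin.val_lt_last hi
      have hzero : T i.castSucc (p.succAbove (Fin.last m)) = 0 := by
        rw [Fin.succAbove_of_le_castSucc _ _ le_rfl, hT]
        simp only [Fin.val_castSucc, Fin.val_succ, Fin.val_last]
        rw [if_neg (by omega), if_neg (by omega), if_neg (by omega)]
      rw [submatrix_apply, hzero, mul_zero, zero_mul]
  rw [det_succ_row _ (Fin.last (m + 1)), Fintype.sum_eq_add (Fin.last (m + 1)) p hp.symm]
  · rw [Fin.succAbove_last, symmTridiagonal_submatrix_castSucc, hminor]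
    simp only [p, hT, Fin.val_last, Fin.val_castSucc, ↓reduceIte, show m + 1 ≠ m by omega,
      show m + 1 + 1 ≠ m by omega]
    rw [Even.neg_one_pow ⟨m + 1, rfl⟩, Odd.neg_one_pow ⟨m, by ring⟩]
    ring
  · rintro j ⟨hj, hj'⟩
    have h1 : (j : ℕ) ≠ m + 1 := fun h => hj (Fin.ext h)
    have h2 : (j : ℕ) ≠ m := fun h => hj' (Fin.ext h)
    simp only [hT, Fin.val_last]
    rw [if_neg (by omega), if_neg (by omega), if_neg (by omega), mul_zero, zero_mul]

theorem det_symmTridiagonal_of_recurrence {x : ℕ → R} (h0 : x 0 = 1)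
    (h1 : d 0 * x 0 + e 0 * x 1 = 0)
    (hrec : ∀ n, e n * x n + d (n + 1) * x (n + 1) + e (n + 1) * x (n + 2) = 0) (m : ℕ) :
    (symmTridiagonal d e m).det = (-1) ^ m * (∏ j ∈ range m, e j) * x m := by
  induction m using Nat.twoStepInduction with
  | zero => simp [h0]
  | one =>
    simp only [det_fin_one, symmTridiagonal, of_apply, Fin.val_zero, if_true, pow_one,
      prod_range_one]
    linear_combination h1 - d 0 * h0
  | more n ih₀ ih₁ =>
    rw [det_symmTridiagonal_succ_succ, ih₀, ih₁]
    simp only [prod_range_succ]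
    linear_combination -(-1) ^ n * (∏ j ∈ range n, e j) * e n * hrec n

end Matrix

noncomputable def coneSs (ℓ s t : ℝ) : ℝ := (2 * s * (s - t) + ℓ ^ 2) / √((t - s) ^ 2 + ℓ ^ 2)

section ConeDerivatives

variable {ℓ : ℝ}

theorem coneS_comm (ℓ s t : ℝ) : coneS ℓ s t = coneS ℓ t s := by
  rw [coneS, coneS, add_comm s, sub_sq_comm]

theorem hasDerivAt_coneS (hℓ : ℓ ≠ 0) (s t : ℝ) :
    HasDerivAt (fun x => coneS ℓ x t) (coneSs ℓ s t) s := by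
  have hR : 0 < (t - s) ^ 2 + ℓ ^ 2 := by positivity
  have hR' : √((t - s) ^ 2 + ℓ ^ 2) ^ 2 = (t - s) ^ 2 + ℓ ^ 2 := Real.sq_sqrt hR.le
  refine (((hasDerivAt_id' s).add_const t).mul
    ((((hasDerivAt_const s t).sub (hasDerivAt_id' s)).pow 2).add_const (ℓ ^ 2)
      |>.sqrt hR.ne')).congr_deriv ?_
  simp only [Pi.sub_apply, Pi.pow_apply, coneSs]
  field_simp
  linear_combination 2 * hR'

theorem deriv_coneS (hℓ : ℓ ≠ 0) (t : ℝ) :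
    deriv (fun x => coneS ℓ x t) = fun s => coneSs ℓ s t :=
  funext fun s => (hasDerivAt_coneS hℓ s t).deriv

theorem hasDerivAt_coneSs_comp_explicit (hℓ : ℓ ≠ 0) {u v : ℝ → ℝ} {u' v' y : ℝ}
    (hu : HasDerivAt u u' y) (hv : HasDerivAt v v' y) :
    HasDerivAt (fun x => coneSs ℓ (u x) (v x))
      (((2 * (u y - v y) ^ 3 + (3 * u y - v y) * ℓ ^ 2) * u' - (u y + v y) * ℓ ^ 2 * v') /
        √((v y - u y) ^ 2 + ℓ ^ 2) ^ 3) y := by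
  have hR : 0 < (v y - u y) ^ 2 + ℓ ^ 2 := by positivity
  have hr : 0 < √((v y - u y) ^ 2 + ℓ ^ 2) := Real.sqrt_pos.2 hR
  have hR' : √((v y - u y) ^ 2 + ℓ ^ 2) ^ 2 = (v y - u y) ^ 2 + ℓ ^ 2 := Real.sq_sqrt hR.le
  refine ((((hu.const_mul 2).mul (hu.sub hv)).add_const (ℓ ^ 2)).div
    ((((hv.sub hu).pow 2).add_const (ℓ ^ 2)).sqrt hR.ne') hr.ne').congr_deriv ?_
  simp only [Pi.sub_apply, Pi.pow_apply, Pi.mul_apply]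
  field_simp
  linear_combination (8 * u' * u y - 4 * u' * v y - 4 * u y * v') * hR'

theorem coneSss_eq (hℓ : ℓ ≠ 0) (s t : ℝ) :
    coneSss ℓ s t = (2 * (s - t) ^ 3 + (3 * s - t) * ℓ ^ 2) / √((t - s) ^ 2 + ℓ ^ 2) ^ 3 := by
  rw [coneSss, deriv_coneS hℓ,
    (hasDerivAt_coneSs_comp_explicit hℓ (hasDerivAt_id' s) (hasDerivAt_const s t)).deriv]
  ring

theorem coneSst_eq (hℓ : ℓ ≠ 0) (s t : ℝ) :
    coneSst ℓ s t = -((s + t) * ℓ ^ 2) / √((t - s) ^ 2 + ℓ ^ 2) ^ 3 := by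
  have h : (fun u => deriv (fun v => coneS ℓ u v) t) = fun u => coneSs ℓ t u := by
    funext u
    rw [funext (coneS_comm ℓ u), deriv_coneS hℓ]
  rw [coneSst, h,
    (hasDerivAt_coneSs_comp_explicit hℓ (hasDerivAt_const s t) (hasDerivAt_id' s)).deriv,
    sub_sq_comm s t]
  ring

theorem coneStt_eq_coneSss (s t : ℝ) : coneStt ℓ s t = coneSss ℓ t s := by
  simp_rw [coneStt, coneSss, coneS_comm ℓ s]

theorem hasDerivAt_coneSs_comp (hℓ : ℓ ≠ 0) {u v : ℝ → ℝ} {u' v' y : ℝ}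
    (hu : HasDerivAt u u' y) (hv : HasDerivAt v v' y) :
    HasDerivAt (fun x => coneSs ℓ (u x) (v x))
      (coneSss ℓ (u y) (v y) * u' + coneSst ℓ (u y) (v y) * v') y := by
  refine (hasDerivAt_coneSs_comp_explicit hℓ hu hv).congr_deriv ?_
  rw [coneSss_eq hℓ, coneSst_eq hℓ]
  ring

/-- Since `S` is symmetric, `∂S/∂t (s, t) = coneSs ℓ t s`. -/
theorem hasDerivAt_coneSs_swap_comp (hℓ : ℓ ≠ 0) {u v : ℝ → ℝ} {u' v' y : ℝ}
    (hu : HasDerivAt u u' y) (hv : HasDerivAt v v' y) :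
    HasDerivAt (fun x => coneSs ℓ (v x) (u x))
      (coneSst ℓ (u y) (v y) * u' + coneStt ℓ (u y) (v y) * v') y := by
  refine (hasDerivAt_coneSs_comp_explicit hℓ hv hu).congr_deriv ?_
  rw [coneStt_eq_coneSss, coneSss_eq hℓ, coneSst_eq hℓ, sub_sq_comm (v y)]
  ring

end ConeDerivatives

section Catenoid

variable {ℓ y : ℝ}

theorem catenoidH_zero (ℓ : ℝ) : catenoidH ℓ 0 = fun y => y := by
  funext y
  simp only [catenoidH]
  ring

theorem catenoidH_eq_pow (ℓ : ℝ) (n : ℕ) (y : ℝ) :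
    catenoidH ℓ n y = ((2 * y + ℓ) * ((2 * y + ℓ) ^ n) ^ 2 + (2 * y - ℓ) * ((2 * y - ℓ) ^ n) ^ 2) /
      (4 * (2 * y + ℓ) ^ n * (2 * y - ℓ) ^ n) := by
  rw [catenoidH, show 4 * y ^ 2 - ℓ ^ 2 = (2 * y + ℓ) * (2 * y - ℓ) by ring, mul_pow]
  ring

theorem catenoidH_eq_succ_pow (ha : 2 * y + ℓ ≠ 0) (hb : 2 * y - ℓ ≠ 0) (n : ℕ) :
    catenoidH ℓ n y =
      ((2 * y - ℓ) * ((2 * y + ℓ) ^ (n + 1)) ^ 2 + (2 * y + ℓ) * ((2 * y - ℓ) ^ (n + 1)) ^ 2) /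
        (4 * (2 * y + ℓ) ^ (n + 1) * (2 * y - ℓ) ^ (n + 1)) := by
  rw [catenoidH_eq_pow]
  field_simp
  ring

theorem differentiableAt_catenoidH (h : 4 * y ^ 2 - ℓ ^ 2 ≠ 0) (n : ℕ) :
    DifferentiableAt ℝ (catenoidH ℓ n) y := by
  unfold catenoidH
  fun_prop (disch := simp [h])

theorem coneSs_div_eq {a b A B : ℝ} (hℓ : 0 < ℓ) (hab : a - b = 2 * ℓ) (hA : 0 < A) (hB : 0 < B) :
    coneSs ℓ ((b * A ^ 2 + a * B ^ 2) / (4 * A * B)) ((a * A ^ 2 + b * B ^ 2) / (4 * A * B)) =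
      (a * B ^ 2 - b * A ^ 2) / (2 * A * B) := by
  obtain rfl : a = b + 2 * ℓ := by linarith
  have hsqrt : √(((((b + 2 * ℓ) * A ^ 2 + b * B ^ 2) / (4 * A * B)) -
      ((b * A ^ 2 + (b + 2 * ℓ) * B ^ 2) / (4 * A * B))) ^ 2 + ℓ ^ 2) =
      ℓ * (A ^ 2 + B ^ 2) / (2 * A * B) := by
    rw [Real.sqrt_eq_iff_mul_self_eq (by positivity) (by positivity)]
    field_simp
    ring
  rw [coneSs, hsqrt]
  field_simp
  ring

theorem coneSs_catenoidH (hℓ : 0 < ℓ) (hy : ℓ / 2 < y) (n : ℕ) :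
    coneSs ℓ (catenoidH ℓ n y) (catenoidH ℓ (n + 1) y) =
      ((2 * y + ℓ) * ((2 * y - ℓ) ^ (n + 1)) ^ 2 - (2 * y - ℓ) * ((2 * y + ℓ) ^ (n + 1)) ^ 2) /
        (2 * (2 * y + ℓ) ^ (n + 1) * (2 * y - ℓ) ^ (n + 1)) := by
  have ha : 0 < 2 * y + ℓ := by linarith
  have hb : 0 < 2 * y - ℓ := by linarith
  rw [catenoidH_eq_succ_pow ha.ne' hb.ne' n, catenoidH_eq_pow ℓ (n + 1)]
  exact coneSs_div_eq hℓ (by ring) (by positivity) (by positivity)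

theorem coneSs_catenoidH_swap (hℓ : 0 < ℓ) (hy : ℓ / 2 < y) (n : ℕ) :
    coneSs ℓ (catenoidH ℓ (n + 1) y) (catenoidH ℓ n y) =
      ((2 * y + ℓ) * ((2 * y + ℓ) ^ (n + 1)) ^ 2 - (2 * y - ℓ) * ((2 * y - ℓ) ^ (n + 1)) ^ 2) /
        (2 * (2 * y + ℓ) ^ (n + 1) * (2 * y - ℓ) ^ (n + 1)) := by
  have ha : 0 < 2 * y + ℓ := by linarith
  have hb : 0 < 2 * y - ℓ := by linarith
  rw [catenoidH_eq_succ_pow ha.ne' hb.ne' n, catenoidH_eq_pow ℓ (n + 1)]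
  convert coneSs_div_eq (a := 2 * y + ℓ) (b := 2 * y - ℓ) hℓ (by ring) (pow_pos hb (n + 1))
    (pow_pos ha (n + 1)) using 2 <;> ring

theorem coneSs_catenoidH_zero_one (hℓ : 0 < ℓ) (hy : ℓ / 2 < y) :
    coneSs ℓ (catenoidH ℓ 0 y) (catenoidH ℓ 1 y) = -ℓ := by
  have ha : 0 < 2 * y + ℓ := by linarith
  have hb : 0 < 2 * y - ℓ := by linarith
  rw [coneSs_catenoidH hℓ hy 0]
  field_simp
  ring

theorem coneSs_catenoidH_swap_add (hℓ : 0 < ℓ) (hy : ℓ / 2 < y) (n : ℕ) :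
    coneSs ℓ (catenoidH ℓ (n + 1) y) (catenoidH ℓ n y) +
      coneSs ℓ (catenoidH ℓ (n + 1) y) (catenoidH ℓ (n + 2) y) = 0 := by
  have ha : 0 < 2 * y + ℓ := by linarith
  have hb : 0 < 2 * y - ℓ := by linarith
  rw [coneSs_catenoidH_swap hℓ hy, coneSs_catenoidH hℓ hy]
  field_simp
  ring

end Catenoid

section Jacobi

open Filter Topology

variable {ℓ y : ℝ}

theorem hasDerivAt_catenoidH (hℓ : 0 < ℓ) (hy : ℓ / 2 < y) (n : ℕ) :
    HasDerivAt (catenoidH ℓ n) (deriv (catenoidH ℓ n) y) y :=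
  (differentiableAt_catenoidH (by nlinarith) n).hasDerivAt

theorem catenoidH_jacobi_zero (hℓ : 0 < ℓ) (hy : ℓ / 2 < y) :
    coneSss ℓ (catenoidH ℓ 0 y) (catenoidH ℓ 1 y) * deriv (catenoidH ℓ 0) y +
      coneSst ℓ (catenoidH ℓ 0 y) (catenoidH ℓ 1 y) * deriv (catenoidH ℓ 1) y = 0 := by
  have hd := hasDerivAt_coneSs_comp hℓ.ne' (hasDerivAt_catenoidH hℓ hy 0)
    (hasDerivAt_catenoidH hℓ hy 1)
  have hconst : (fun x => coneSs ℓ (catenoidH ℓ 0 x) (catenoidH ℓ 1 x)) =ᶠ[𝓝 y] fun _ => -ℓ :=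
    eventually_of_mem (Ioi_mem_nhds hy) fun x hx => coneSs_catenoidH_zero_one hℓ hx
  rw [← hd.deriv, hconst.deriv_eq, deriv_const]

theorem catenoidH_jacobi_succ (hℓ : 0 < ℓ) (hy : ℓ / 2 < y) (n : ℕ) :
    coneSst ℓ (catenoidH ℓ n y) (catenoidH ℓ (n + 1) y) * deriv (catenoidH ℓ n) y +
      (coneStt ℓ (catenoidH ℓ n y) (catenoidH ℓ (n + 1) y) +
        coneSss ℓ (catenoidH ℓ (n + 1) y) (catenoidH ℓ (n + 2) y)) * deriv (catenoidH ℓ (n + 1)) y +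
      coneSst ℓ (catenoidH ℓ (n + 1) y) (catenoidH ℓ (n + 2) y) * deriv (catenoidH ℓ (n + 2)) y
      = 0 := by
  have hd := (hasDerivAt_coneSs_swap_comp hℓ.ne' (hasDerivAt_catenoidH hℓ hy n)
    (hasDerivAt_catenoidH hℓ hy (n + 1))).add
    (hasDerivAt_coneSs_comp hℓ.ne' (hasDerivAt_catenoidH hℓ hy (n + 1))
      (hasDerivAt_catenoidH hℓ hy (n + 2)))
  have hconst : (fun x => coneSs ℓ (catenoidH ℓ (n + 1) x) (catenoidH ℓ n x) +
      coneSs ℓ (catenoidH ℓ (n + 1) x) (catenoidH ℓ (n + 2) x)) =ᶠ[𝓝 y] fun _ => 0 :=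
    eventually_of_mem (Ioi_mem_nhds hy) fun x hx => coneSs_catenoidH_swap_add hℓ hx n
  linear_combination hd.deriv.symm.trans (hconst.deriv_eq.trans (deriv_const y 0))

end Jacobi

theorem stmt_11_general (ℓ : ℝ) (hℓ : 0 < ℓ) (m : ℕ) (y : ℝ) (hy : ℓ/2 < y) :
    (Hhat ℓ y m).det =
      (-1 : ℝ)^m *
        (∏ j ∈ range m, coneSst ℓ (catenoidH ℓ j y) (catenoidH ℓ (j+1) y)) *
        deriv (catenoidH ℓ m) y := by
  have hHhat : Hhat ℓ y m = Matrix.symmTridiagonal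
      (fun i => if i = 0 then coneSss ℓ (catenoidH ℓ 0 y) (catenoidH ℓ 1 y)
        else coneStt ℓ (catenoidH ℓ (i - 1) y) (catenoidH ℓ i y) +
          coneSss ℓ (catenoidH ℓ i y) (catenoidH ℓ (i + 1) y))
      (fun i => coneSst ℓ (catenoidH ℓ i y) (catenoidH ℓ (i + 1) y)) m := rfl
  rw [hHhat]
  exact Matrix.det_symmTridiagonal_of_recurrence _ _ (x := fun n => deriv (catenoidH ℓ n) y)
    (by simp [catenoidH_zero]) (by simpa using catenoidH_jacobi_zero hℓ hy)
    (fun n => by simpa using catenoidH_jacobi_succ hℓ hy n) m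

theorem stmt_11 (ℓ : ℝ) (hℓ : 0 < ℓ) (m : ℕ) (hm : 1 ≤ m) (y : ℝ) (hy : ℓ/2 < y) :
    (Hhat ℓ y m).det =
      (-1 : ℝ)^m *
        (∏ j ∈ range m, coneSst ℓ (catenoidH ℓ j y) (catenoidH ℓ (j+1) y)) *
        deriv (catenoidH ℓ m) y :=
  stmt_11_general ℓ hℓ m y hy
end
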